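/- arXiv:1007.5004 — 3 statements merged into one kernel-verified Lean document; each statement's English description precedes it below -/
import Mathlib

section
/- Let 0 < γ* ≤ β* and 0 < γ̃ < 1/(K-1) with K ≥ 2, where γ̃ maximizes φ(x) = f(x)(1-(K-1)x)/x on (0, 1/(K-1)). Suppose 1-(K-1)γ*β*-(K-2)β* > 0. Then the ratio r = [φ(γ̃)(1+β*)] / [(f(γ*)/γ*)(1-(K-1)γ*β*-(K-2)β*)] satisfies r ≥ 1; i.e., u_i(p̃) ≥ u_i^L: every transmitter prefers the operating point to being the Stackelberg leader. -/
open Set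

/-!
Since `γ* ≤ β*`, the identity
`(1 - (K-1)γ*)(1 + β*) = (1 - (K-1)γ*β* - (K-2)β*) + (K-1)(β* - γ*)`
bounds the leader's factor by `(1 - (K-1)γ*)(1 + β*)`, so the leader's utility is at most
`φ(γ*)(1 + β*)`. Positivity of the leader's factor forces `(K-1)γ* < 1`, so `γ*` lies in the
interval on which `γ̃` maximizes `φ`, and `φ(γ*) ≤ φ(γ̃)`.
-/

lemma stackelberg_factor_le {a β γ : ℝ} (ha : 0 ≤ a) (hγβ : γ ≤ β) :
    1 - a * γ * β - (a - 1) * β ≤ (1 - a * γ) * (1 + β) := by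
  have hgap : (1 - a * γ) * (1 + β) = (1 - a * γ * β - (a - 1) * β) + a * (β - γ) := by ring
  linarith [mul_nonneg ha (sub_nonneg.2 hγβ)]

lemma lt_one_div_of_stackelberg_factor_pos {a β γ : ℝ} (ha : 0 < a) (hγ : 0 < γ) (hγβ : γ ≤ β)
    (hfac : 0 < 1 - a * γ * β - (a - 1) * β) : γ < 1 / a := by
  have hprod : 0 < (1 - a * γ) * (1 + β) := hfac.trans_le (stackelberg_factor_le ha.le hγβ)
  have hlt : a * γ < 1 := by
    have := pos_of_mul_pos_left hprod (by linarith)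
    linarith
  rwa [lt_one_div hγ ha, lt_div_iff₀ hγ]

theorem stmt_3_general (K : ℕ) (hK : 2 ≤ K) (f : ℝ → ℝ) (hfpos : ∀ x ∈ Ioi (0 : ℝ), 0 < f x)
    (φ : ℝ → ℝ) (hφ : ∀ x, φ x = f x * (1 - ((K : ℝ) - 1) * x) / x)
    (γs βs γt : ℝ) (hγs : 0 < γs) (hγβ : γs ≤ βs)
    (hmax : ∀ x ∈ Ioo 0 (1 / ((K : ℝ) - 1)), φ x ≤ φ γt)
    (hden : 0 < 1 - ((K : ℝ) - 1) * γs * βs - ((K : ℝ) - 2) * βs) :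
    1 ≤ φ γt * (1 + βs) /
      (f γs / γs * (1 - ((K : ℝ) - 1) * γs * βs - ((K : ℝ) - 2) * βs)) := by
  have ha : (0 : ℝ) < (K : ℝ) - 1 := by
    have : (2 : ℝ) ≤ K := by exact_mod_cast hK
    linarith
  rw [show (K : ℝ) - 2 = ((K : ℝ) - 1) - 1 by ring] at hden ⊢
  have hc : 0 < f γs / γs := div_pos (hfpos γs hγs) hγs
  have hγs_mem : γs ∈ Ioo 0 (1 / ((K : ℝ) - 1)) :=
    ⟨hγs, lt_one_div_of_stackelberg_factor_pos ha hγs hγβ hden⟩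
  rw [one_le_div (mul_pos hc hden)]
  calc f γs / γs * (1 - ((K : ℝ) - 1) * γs * βs - ((K : ℝ) - 1 - 1) * βs)
      ≤ f γs / γs * ((1 - ((K : ℝ) - 1) * γs) * (1 + βs)) :=
        mul_le_mul_of_nonneg_left (stackelberg_factor_le ha.le hγβ) hc.le
    _ = φ γs * (1 + βs) := by rw [hφ]; ring
    _ ≤ φ γt * (1 + βs) := mul_le_mul_of_nonneg_right (hmax γs hγs_mem) (by linarith)

/-- Every transmitter prefers the operating point to being the Stackelberg leader:
φ(γ̃)(1+β*) / ((f(γ*)/γ*)(1-(K-1)γ*β*-(K-2)β*)) ≥ 1. -/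
theorem stmt_3 (K : ℕ) (hK : 2 ≤ K) (f : ℝ → ℝ) (hfpos : ∀ x ∈ Ioi (0 : ℝ), 0 < f x)
    (φ : ℝ → ℝ) (hφ : ∀ x, φ x = f x * (1 - ((K : ℝ) - 1) * x) / x)
    (γs βs γt : ℝ) (hγs : 0 < γs) (hγβ : γs ≤ βs)
    (hγt : γt ∈ Ioo 0 (1 / ((K : ℝ) - 1)))
    (hmax : ∀ x ∈ Ioo 0 (1 / ((K : ℝ) - 1)), φ x ≤ φ γt)
    (hden : 0 < 1 - ((K : ℝ) - 1) * γs * βs - ((K : ℝ) - 2) * βs) :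
    1 ≤ φ γt * (1 + βs) /
      (f γs / γs * (1 - ((K : ℝ) - 1) * γs * βs - ((K : ℝ) - 2) * βs)) :=
  stmt_3_general K hK f hfpos φ hφ γs βs γt hγs hγβ hmax hden
end

section
/- Let f : [0,∞) → [0,1] be continuous with f(0) = 0, lim_{x→0+} f(x)/x = 0, f nondecreasing, f(β*) > 0 for a fixed β* > 0. For each K ≥ 2 let γ̃_K ∈ (0, 1/(K-1)] and γ*_K ∈ (0, β*]. Define φ_K(γ̃_K, β*) = (f(γ̃_K)/γ̃_K)(1-γ̃_K[(K-1)γ*_K + K-2]) - (f(β*)/β*)(1-β*[(K-1)γ*_K + K-2]). Then φ_K(γ̃_K,β*) → +∞ as K → ∞; in particular there exists K₀ such that for all K ≥ K₀, φ_K(γ̃_K,β*) > 0. -/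
/-!
Write `A_K = (K-1)γ*_K + K - 2 ≥ K - 2`. Then
`φ_K = (f(γ̃_K)/γ̃_K - f(β*)/β*) + A_K (f(β*) - f(γ̃_K))`.
Since `0 < γ̃_K ≤ 1/(K-1)`, `γ̃_K → 0⁺`, so `f(γ̃_K)/γ̃_K → 0` and hence, multiplying
by `γ̃_K`, also `f(γ̃_K) → 0`. The first bracket therefore converges while `A_K → ∞` is multiplied by a factor tending
to `f(β*) > 0`.
-/

open Set Filter Topology

theorem tendsto_nhdsGT_zero_of_mem_Ioc {α : Type*} {l : Filter α} {u v : α → ℝ}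
    (hu : ∀ᶠ n in l, u n ∈ Ioc 0 (v n)) (hv : Tendsto v l (𝓝 0)) :
    Tendsto u l (𝓝[>] 0) :=
  tendsto_nhdsWithin_of_tendsto_nhds_of_eventually_within _
    (tendsto_of_tendsto_of_tendsto_of_le_of_le' tendsto_const_nhds hv
      (hu.mono fun _ h => h.1.le) (hu.mono fun _ h => h.2))
    (hu.mono fun _ h => h.1)

theorem tendsto_zero_of_tendsto_div_self {f : ℝ → ℝ} {L : ℝ}
    (hf : Tendsto (fun x => f x / x) (𝓝[>] 0) (𝓝 L)) : Tendsto f (𝓝[>] 0) (𝓝 0) := by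
  have hprod : Tendsto (fun x => f x / x * x) (𝓝[>] 0) (𝓝 (L * 0)) :=
    hf.mul (tendsto_nhdsWithin_of_tendsto_nhds tendsto_id)
  rw [mul_zero] at hprod
  refine hprod.congr' ?_
  filter_upwards [self_mem_nhdsWithin] with x (hx : 0 < x)
  exact div_mul_cancel₀ _ hx.ne'

theorem tendsto_one_div_natCast_sub_one_atTop :
    Tendsto (fun K : ℕ => 1 / ((K : ℝ) - 1)) atTop (𝓝 0) := by
  simpa only [one_div, Pi.inv_def, ← sub_eq_add_neg] using
    (tendsto_atTop_add_const_right atTop (-1 : ℝ) tendsto_natCast_atTop_atTop).inv_tendsto_atTop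

theorem div_mul_one_sub_mul_sub_div_mul_one_sub_mul {x y β γ : ℝ} (hβ : β ≠ 0) (hγ : γ ≠ 0)
    (A : ℝ) :
    y / γ * (1 - γ * A) - x / β * (1 - β * A) = (y / γ - x / β) + A * (x - y) := by
  field_simp
  ring

theorem stmt_4_general (f : ℝ → ℝ)
    (hflim : Tendsto (fun x => f x / x) (nhdsWithin 0 (Ioi 0)) (nhds 0))
    (βs : ℝ) (hβs : 0 < βs) (hfβ : 0 < f βs)
    (γt γs : ℕ → ℝ)
    (hγt : ∀ K : ℕ, 2 ≤ K → γt K ∈ Ioc 0 (1 / ((K : ℝ) - 1)))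
    (hγs : ∀ K : ℕ, 2 ≤ K → γs K ∈ Ioc 0 βs)
    (Φ : ℕ → ℝ)
    (hΦ : ∀ K : ℕ, Φ K =
      f (γt K) / γt K * (1 - γt K * (((K : ℝ) - 1) * γs K + (K : ℝ) - 2)) -
      f βs / βs * (1 - βs * (((K : ℝ) - 1) * γs K + (K : ℝ) - 2))) :
    Tendsto Φ atTop atTop ∧ ∃ K₀ : ℕ, ∀ K : ℕ, K₀ ≤ K → 0 < Φ K := by
  set A : ℕ → ℝ := fun K => ((K : ℝ) - 1) * γs K + (K : ℝ) - 2
  have hγt0 : Tendsto γt atTop (𝓝[>] 0) :=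
    tendsto_nhdsGT_zero_of_mem_Ioc ((eventually_ge_atTop 2).mono hγt)
      tendsto_one_div_natCast_sub_one_atTop
  have hfγt : Tendsto (fun K => f βs - f (γt K)) atTop (𝓝 (f βs - 0)) :=
    tendsto_const_nhds.sub ((tendsto_zero_of_tendsto_div_self hflim).comp hγt0)
  have hA : Tendsto A atTop atTop := by
    refine tendsto_atTop_mono' atTop ?_
      (tendsto_atTop_add_const_right atTop (-2 : ℝ) tendsto_natCast_atTop_atTop)
    filter_upwards [eventually_ge_atTop 2] with K hK
    have hK1 : (1 : ℝ) ≤ K := by exact_mod_cast (by omega : 1 ≤ K)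
    have : 0 ≤ ((K : ℝ) - 1) * γs K := mul_nonneg (by linarith) (hγs K hK).1.le
    simp only [A]
    linarith
  have hdecomp : ∀ᶠ K in atTop,
      (f (γt K) / γt K - f βs / βs) + A K * (f βs - f (γt K)) = Φ K := by
    filter_upwards [eventually_ge_atTop 2] with K hK
    rw [hΦ, div_mul_one_sub_mul_sub_div_mul_one_sub_mul hβs.ne' (hγt K hK).1.ne']
  have hΦtop : Tendsto Φ atTop atTop :=
    (((hflim.comp hγt0).sub_const _).add_atTop
      (hA.atTop_mul_pos (by rwa [sub_zero]) hfγt)).congr' hdecomp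
  exact ⟨hΦtop, eventually_atTop.mp (hΦtop.eventually_gt_atTop 0)⟩

/-- The quantity φ_K(γ̃_K, β*) comparing the operating point with the Stackelberg follower
utility diverges to +∞ as K → ∞; in particular it is eventually positive. -/
theorem stmt_4 (f : ℝ → ℝ) (hfc : Continuous f) (hf0 : f 0 = 0)
    (hflim : Tendsto (fun x => f x / x) (nhdsWithin 0 (Ioi 0)) (nhds 0))
    (hfmono : MonotoneOn f (Ici 0)) (hfrange : ∀ x ∈ Ici (0 : ℝ), f x ∈ Icc (0 : ℝ) 1)
    (βs : ℝ) (hβs : 0 < βs) (hfβ : 0 < f βs)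
    (γt γs : ℕ → ℝ)
    (hγt : ∀ K : ℕ, 2 ≤ K → γt K ∈ Ioc 0 (1 / ((K : ℝ) - 1)))
    (hγs : ∀ K : ℕ, 2 ≤ K → γs K ∈ Ioc 0 βs)
    (Φ : ℕ → ℝ)
    (hΦ : ∀ K : ℕ, Φ K =
      f (γt K) / γt K * (1 - γt K * (((K : ℝ) - 1) * γs K + (K : ℝ) - 2)) -
      f βs / βs * (1 - βs * (((K : ℝ) - 1) * γs K + (K : ℝ) - 2))) :
    Tendsto Φ atTop atTop ∧ ∃ K₀ : ℕ, ∀ K : ℕ, K₀ ≤ K → 0 < Φ K :=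
  stmt_4_general f hflim βs hβs hfβ γt γs hγt hγs Φ hΦ
end

section
/- Let φ(x) = f(x)(1-(K-1)x)/x with f(x) = 1 - e^{-x} (i.e., M = 1) and K ≥ 2. The equation x[1-(K-1)x]f'(x) - f(x) = 0, i.e., x(1-(K-1)x)e^{-x} = 1-e^{-x}, has at most one solution in (0, 1/(K-1)). -/
/-!
Multiplying by `e^x` turns the equation into `e^x - x + (K-1) x^2 = 1`, and the left-hand side is
strictly increasing on `[0, ∞)` since its derivative `e^x - 1 + 2 (K-1) x` is positive there.
-/

open Set Real

lemma strictMonoOn_exp_sub_add_mul_sq {c : ℝ} (hc : 0 ≤ c) :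
    StrictMonoOn (fun x : ℝ => exp x - x + c * x ^ 2) (Ici 0) := by
  refine strictMonoOn_of_deriv_pos (convex_Ici 0) (by fun_prop) fun x hx => ?_
  rw [interior_Ici, mem_Ioi] at hx
  have hderiv : HasDerivAt (fun x : ℝ => exp x - x + c * x ^ 2) (exp x - 1 + c * (2 * x ^ 1)) x :=
    ((hasDerivAt_exp x).sub (hasDerivAt_id x)).add ((hasDerivAt_pow 2 x).const_mul c)
  rw [hderiv.deriv]
  have hexp : 1 < exp x := one_lt_exp_iff.mpr hx
  nlinarith

lemma mul_mul_exp_neg_eq_one_sub_exp_neg_iff (c x : ℝ) :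
    x * (1 - c * x) * exp (-x) = 1 - exp (-x) ↔ exp x - x + c * x ^ 2 = 1 := by
  rw [exp_neg]
  field_simp
  constructor <;> intro h <;> linarith

/-- For the efficiency function f(x) = 1 - e^{-x} (M = 1), the equation
x(1-(K-1)x)e^{-x} = 1 - e^{-x} has at most one solution in (0, 1/(K-1)). -/
theorem stmt_14 (K : ℕ) (hK : 2 ≤ K) :
    Set.Subsingleton {x : ℝ | x ∈ Ioo 0 (1 / ((K : ℝ) - 1)) ∧
      x * (1 - ((K : ℝ) - 1) * x) * Real.exp (-x) = 1 - Real.exp (-x)} := by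
  have hc : (0 : ℝ) ≤ (K : ℝ) - 1 := by
    have : (2 : ℝ) ≤ K := by exact_mod_cast hK
    linarith
  rintro a ⟨⟨ha, -⟩, hea⟩ b ⟨⟨hb, -⟩, heb⟩
  rw [mul_mul_exp_neg_eq_one_sub_exp_neg_iff] at hea heb
  exact (strictMonoOn_exp_sub_add_mul_sq hc).injOn ha.le hb.le (hea.trans heb.symm)
end
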